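/- arXiv:math/0003221 — 5 statements merged into one kernel-verified Lean document; each statement's English description precedes it below -/
import Mathlib

section
/- Assume U is finite-dimensional and let J be a dynamical twist for U. Let H_J denote the weak Hopf algebra obtained from H = End_k(A)⊗U by twisting with (ĴΘ, Θ̄Ĵ⁻¹), with comultiplication Δ_J(h) = Θ̄Ĵ⁻¹Δ_H(h)ĴΘ. For λ¹,λ² ∈ T and x ∈ U*, define φ^x_{λ¹λ²} ∈ (H_J)* by φ^x_{λ¹λ²}(E_{ν¹ν²}u) = δ_{λ¹ν¹}δ_{λ²ν²}x(u). Call x ∈ U* homogeneous of weight (α¹,α²) if x(u) = x(P_{α¹}uP_{α²}) for all u ∈ U. Then for x homogeneous of weight (α¹,α²) and y homogeneous of weight (β¹,β²), the convolution product of the dual weak Hopf algebra (H_J)* (defined by ⟨φψ,h⟩ = ⟨φ⊗ψ, Δ_J(h)⟩) satisfies φ^y_{μ¹μ²}·φ^x_{λ¹λ²} = δ_{α¹,μ¹−λ¹}δ_{α²,μ²−λ²}·φ^z_{λ¹λ²}, where z ∈ U* is given by z(u) = (y⊗x)(J(λ¹)⁻¹Δ(u)J(λ²)). -/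
open TensorProduct

noncomputable section

namespace WHA

variable (k B : Type*) [Field k] [Ring B] [Algebra k B]

/-- `x ↦ x ⊗ 1`, the embedding of `B ⊗ B` into legs 1,2 of `B ⊗ B ⊗ B`. -/
def leg12 : B ⊗[k] B →ₗ[k] B ⊗[k] (B ⊗[k] B) :=
  (TensorProduct.assoc k B B B).toLinearMap ∘ₗ (TensorProduct.mk k (B ⊗[k] B) B).flip 1

/-- `x ↦ 1 ⊗ x`, the embedding of `B ⊗ B` into legs 2,3 of `B ⊗ B ⊗ B`. -/
def leg23 : B ⊗[k] B →ₗ[k] B ⊗[k] (B ⊗[k] B) :=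
  TensorProduct.mk k B (B ⊗[k] B) 1

/-- `a ⊗ b ↦ a ⊗ 1 ⊗ b`, the embedding of `B ⊗ B` into legs 1,3 of `B ⊗ B ⊗ B`. -/
def leg13 : B ⊗[k] B →ₗ[k] B ⊗[k] (B ⊗[k] B) :=
  TensorProduct.map LinearMap.id (TensorProduct.mk k B B 1)

/-- `Δ ⊗ id`, landing in the right-associated triple tensor product. -/
def ext12 (Δ : B →ₗ[k] B ⊗[k] B) : B ⊗[k] B →ₗ[k] B ⊗[k] (B ⊗[k] B) :=
  (TensorProduct.assoc k B B B).toLinearMap ∘ₗ TensorProduct.map Δ LinearMap.id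

/-- `id ⊗ Δ`. -/
def ext23 (Δ : B →ₗ[k] B ⊗[k] B) : B ⊗[k] B →ₗ[k] B ⊗[k] (B ⊗[k] B) :=
  TensorProduct.map LinearMap.id Δ

/-- `(ε ⊗ id)` composed with the canonical isomorphism `k ⊗ B ≅ B`. -/
def epsL (ε : B →ₗ[k] k) : B ⊗[k] B →ₗ[k] B :=
  (TensorProduct.lid k B).toLinearMap ∘ₗ TensorProduct.map ε LinearMap.id

/-- `(id ⊗ ε)` composed with the canonical isomorphism `B ⊗ k ≅ B`. -/
def epsR (ε : B →ₗ[k] k) : B ⊗[k] B →ₗ[k] B :=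
  (TensorProduct.rid k B).toLinearMap ∘ₗ TensorProduct.map LinearMap.id ε

/-- Pairing of two linear functionals against an element of `B ⊗ B`. -/
def pairF (φ ψ : B →ₗ[k] k) : B ⊗[k] B →ₗ[k] k :=
  (TensorProduct.lid k k).toLinearMap ∘ₗ TensorProduct.map φ ψ

/-- The multiplication map `B ⊗ B → B`. -/
def mul2 : B ⊗[k] B →ₗ[k] B := LinearMap.mul' k B

end WHA

namespace DQG

variable (k : Type*) [Field k]
variable (T : Type*) [AddCommGroup T] [Fintype T] [DecidableEq T]
variable (U : Type*) [Ring U] [HopfAlgebra k U]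

/-- The matrix units `E_{λμ}`. -/
def E (l m : T) : Matrix T T k := Matrix.single l m 1

/-- The `(λ,μ)` matrix entry, as a linear functional. -/
def entry (l m : T) : Matrix T T k →ₗ[k] k where
  toFun A := A l m
  map_add' _ _ := rfl
  map_smul' _ _ := rfl

/-- The comultiplication of `End_k(A)`: `Δ(E_{λμ}) = E_{λμ} ⊗ E_{λμ}`. -/
def ΔM : Matrix T T k →ₗ[k] Matrix T T k ⊗[k] Matrix T T k :=
  ∑ l : T, ∑ m : T, (entry k T l m).smulRight (E k T l m ⊗ₜ[k] E k T l m)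

/-- The counit of `End_k(A)`: `ε(E_{λμ}) = 1`. -/
def εM : Matrix T T k →ₗ[k] k := ∑ l : T, ∑ m : T, entry k T l m

/-- The antipode of `End_k(A)`: `S(E_{λμ}) = E_{μλ}`. -/
def SM : Matrix T T k →ₗ[k] Matrix T T k :=
  ∑ l : T, ∑ m : T, (entry k T l m).smulRight (E k T m l)

/-- The comultiplication of the tensor product weak Hopf algebra `H = End_k(A) ⊗ U`. -/
def ΔH : (Matrix T T k ⊗[k] U) →ₗ[k] (Matrix T T k ⊗[k] U) ⊗[k] (Matrix T T k ⊗[k] U) :=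
  (TensorProduct.tensorTensorTensorComm k (Matrix T T k) (Matrix T T k) U U).toLinearMap ∘ₗ
    TensorProduct.map (ΔM k T) Coalgebra.comul

/-- The counit of `H = End_k(A) ⊗ U`. -/
def εH : (Matrix T T k ⊗[k] U) →ₗ[k] k :=
  (TensorProduct.lid k k).toLinearMap ∘ₗ TensorProduct.map (εM k T) Coalgebra.counit

/-- The antipode of `H = End_k(A) ⊗ U`. -/
def SH : (Matrix T T k ⊗[k] U) →ₗ[k] (Matrix T T k ⊗[k] U) :=
  TensorProduct.map (SM k T) (HopfAlgebra.antipode (R := k))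

set_option maxHeartbeats 1000000 in
/-- The canonical ring structure on the triple tensor power of `H = End_k(A) ⊗ U`
(made explicit to help instance resolution). -/
instance triRing : Ring ((Matrix T T k ⊗[k] U) ⊗[k] ((Matrix T T k ⊗[k] U) ⊗[k] (Matrix T T k ⊗[k] U))) := by
  exact Algebra.TensorProduct.instRing (R := k) (A := Matrix T T k ⊗[k] U)
    (B := (Matrix T T k ⊗[k] U) ⊗[k] (Matrix T T k ⊗[k] U))

variable (P : T → U)

/-- The hypotheses on the system of idempotents `{P_μ}` spanning the abelian Hopf
subalgebra `A ⊆ U`. -/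
structure IsPSystem : Prop where
  orth : ∀ m n : T, P m * P n = if m = n then P m else 0
  sum_one : ∑ m : T, P m = 1
  comul_P : ∀ m : T, Coalgebra.comul (R := k) (P m) = ∑ n : T, P n ⊗ₜ[k] P (m - n)
  counit_P : ∀ m : T, Coalgebra.counit (R := k) (P m) = if m = 0 then (1 : k) else 0
  antipode_P : ∀ m : T, HopfAlgebra.antipode (R := k) (P m) = P (-m)

/-- The element `Θ = Σ_{λμ} E_{λ,λ+μ} ⊗ E_{λλ}P_μ` of `H ⊗ H`. -/
def Θ : (Matrix T T k ⊗[k] U) ⊗[k] (Matrix T T k ⊗[k] U) :=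
  ∑ l : T, ∑ m : T, ((E k T l (l + m)) ⊗ₜ[k] (1 : U)) ⊗ₜ[k] ((E k T l l) ⊗ₜ[k] P m)

/-- The element `Θ̄ = Σ_{λμ} E_{λ+μ,λ} ⊗ E_{λλ}P_μ` of `H ⊗ H`. -/
def Θbar : (Matrix T T k ⊗[k] U) ⊗[k] (Matrix T T k ⊗[k] U) :=
  ∑ l : T, ∑ m : T, ((E k T (l + m) l) ⊗ₜ[k] (1 : U)) ⊗ₜ[k] ((E k T l l) ⊗ₜ[k] P m)

/-- `u ⊗ v ↦ (E_{λλ} ⊗ u) ⊗ (E_{λλ} ⊗ v)`. -/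
def embAt (l : T) : U ⊗[k] U →ₗ[k] (Matrix T T k ⊗[k] U) ⊗[k] (Matrix T T k ⊗[k] U) :=
  TensorProduct.map (TensorProduct.mk k (Matrix T T k) U (E k T l l))
    (TensorProduct.mk k (Matrix T T k) U (E k T l l))

/-- The embedding `J ↦ Ĵ = Σ_λ E_{λλ}J⁽¹⁾(λ) ⊗ E_{λλ}J⁽²⁾(λ)` of a
`U ⊗ U`-valued function on `T` into `H ⊗ H`. -/
def emb (J : T → U ⊗[k] U) : (Matrix T T k ⊗[k] U) ⊗[k] (Matrix T T k ⊗[k] U) := ∑ l : T, embAt k T U l (J l)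

/-- `x = a ⊗ b ↦ a ⊗ b ⊗ P_μ ∈ U ⊗ U ⊗ U`. -/
def withP (m : T) : U ⊗[k] U →ₗ[k] U ⊗[k] (U ⊗[k] U) :=
  TensorProduct.map LinearMap.id ((TensorProduct.mk k U U).flip (P m))

/-- `x ↦ P_μ ⊗ x ∈ U ⊗ U ⊗ U`. -/
def withPleft (m : T) : U ⊗[k] U →ₗ[k] U ⊗[k] (U ⊗[k] U) :=
  TensorProduct.mk k U (U ⊗[k] U) (P m)

/-- `J` is a dynamical twist for `U`, with pointwise inverse `Jbar`. -/
structure IsDynTwist (J Jbar : T → U ⊗[k] U) : Prop where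
  inv_right : ∀ l : T, J l * Jbar l = 1
  inv_left : ∀ l : T, Jbar l * J l = 1
  zero_weight : ∀ l m : T,
    J l * Coalgebra.comul (R := k) (P m) = Coalgebra.comul (R := k) (P m) * J l
  counit_left : ∀ l : T, WHA.epsL k U Coalgebra.counit (J l) = 1
  counit_right : ∀ l : T, WHA.epsR k U Coalgebra.counit (J l) = 1
  dyn : ∀ l : T,
    WHA.ext12 k U Coalgebra.comul (J l) * (∑ m : T, withP k T U P m (J (l + m)))
      = WHA.ext23 k U Coalgebra.comul (J l) * WHA.leg23 k U (J l)

end DQG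

namespace DQG

variable (k : Type*) [Field k]
variable (T : Type*) [AddCommGroup T] [Fintype T] [DecidableEq T]
variable (U : Type*) [Ring U] [HopfAlgebra k U]

/-- The functional `φ^x_{λ¹λ²}` on `H = End_k(A) ⊗ U`. -/
def phi (l1 l2 : T) (x : U →ₗ[k] k) : (Matrix T T k ⊗[k] U) →ₗ[k] k :=
  (TensorProduct.lid k k).toLinearMap ∘ₗ TensorProduct.map (entry k T l1 l2) x

end DQG

/-!
On a matrix unit `h = E_{n¹n²} ⊗ u` every factor of `Θ̄ Ĵ⁻¹ Δ_H(h) Ĵ Θ` is a sum of elementary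
tensors `(A ⊗ c) ⊗ (B ⊗ d)`, and the matrix legs multiply as matrix units. The product collapses to
`Σ_{ρ,ρ'} (E_{n¹+ρ, n²+ρ'} ⊗ -) ⊗ (E_{n¹n²} ⊗ -)` applied to
`(1 ⊗ P_ρ) J(n¹)⁻¹ Δ(u) J(n²) (1 ⊗ P_ρ')`. Pairing with `φ^y_{μ¹μ²} ⊗ φ^x_{λ¹λ²}` keeps only
`n = λ`, `ρ = μ¹ - λ¹`, `ρ' = μ² - λ²`, and the homogeneity of `x` turns the two idempotents into
the Kronecker deltas. Both sides are linear in `h`, and the `E_{n¹n²} ⊗ u` span `H`.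
-/

theorem TensorProduct.ext_matrix_single {m n R N M : Type*} [Finite m] [Finite n]
    [DecidableEq m] [DecidableEq n] [CommSemiring R] [AddCommMonoid N] [Module R N]
    [AddCommMonoid M] [Module R M] {f g : Matrix m n R ⊗[R] N →ₗ[R] M}
    (h : ∀ i j x, f (Matrix.single i j 1 ⊗ₜ x) = g (Matrix.single i j 1 ⊗ₜ x)) : f = g :=
  TensorProduct.ext <| Matrix.ext_linearMap R fun i j =>
    LinearMap.ext_ring <| LinearMap.ext <| h i j

section EmbLegs

variable {R A B C D : Type*} [CommSemiring R] [Semiring A] [Semiring B] [Semiring C] [Semiring D]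
  [Algebra R A] [Algebra R B] [Algebra R C] [Algebra R D]

def embLegs (a : A) (b : B) : C ⊗[R] D →ₗ[R] (A ⊗[R] C) ⊗[R] (B ⊗[R] D) :=
  TensorProduct.map (TensorProduct.mk R A C a) (TensorProduct.mk R B D b)

@[simp]
lemma embLegs_tmul (a : A) (b : B) (c : C) (d : D) :
    embLegs a b (c ⊗ₜ[R] d) = (a ⊗ₜ c) ⊗ₜ (b ⊗ₜ d) := rfl

@[simp]
lemma embLegs_zero_right (a : A) : embLegs a (0 : B) = (0 : C ⊗[R] D →ₗ[R] _) := by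
  simp [embLegs, TensorProduct.map_zero_right]

lemma embLegs_mul_embLegs (a a' : A) (b b' : B) (s t : C ⊗[R] D) :
    embLegs a b s * embLegs a' b' t = embLegs (a * a') (b * b') (s * t) := by
  induction s using TensorProduct.induction_on with
  | zero => simp
  | add s₁ s₂ h₁ h₂ => simp only [map_add, add_mul, h₁, h₂]
  | tmul c d =>
    induction t using TensorProduct.induction_on with
    | zero => simp
    | add t₁ t₂ h₁ h₂ => simp only [map_add, mul_add, h₁, h₂]
    | tmul c' d' => simp

lemma tensorTensorTensorComm_tmul_tmul (a : A) (b : B) (t : C ⊗[R] D) :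
    TensorProduct.tensorTensorTensorComm R A B C D ((a ⊗ₜ b) ⊗ₜ t) = embLegs a b t := by
  induction t using TensorProduct.induction_on with
  | zero => simp
  | tmul c d => rfl
  | add s t hs ht => simp only [TensorProduct.tmul_add, map_add, hs, ht]

end EmbLegs

namespace WHA

variable {k B : Type*} [Field k] [Ring B] [Algebra k B]

@[simp]
lemma pairF_tmul (φ ψ : B →ₗ[k] k) (a b : B) : pairF k B φ ψ (a ⊗ₜ b) = φ a * ψ b := rfl

lemma pairF_one_tmul_mul_mul_one_tmul (φ ψ : B →ₗ[k] k) (p q : B) (c : k)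
    (hψ : ∀ w, ψ (p * w * q) = c * ψ w) (s : B ⊗[k] B) :
    pairF k B φ ψ ((1 ⊗ₜ p) * s * (1 ⊗ₜ q)) = c * pairF k B φ ψ s := by
  induction s using TensorProduct.induction_on with
  | zero => simp
  | add s t hs ht => simp only [mul_add, add_mul, map_add, hs, ht]
  | tmul a b =>
    simp only [Algebra.TensorProduct.tmul_mul_tmul, one_mul, mul_one, pairF_tmul, hψ]
    ring

end WHA

namespace DQG

variable {k : Type*} [Field k] {T : Type*} {U : Type*} [Ring U] [HopfAlgebra k U]

@[simp]
lemma entry_apply (l m : T) (A : Matrix T T k) : entry k T l m A = A l m := rfl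

lemma phi_tmul (l1 l2 : T) (x : U →ₗ[k] k) (A : Matrix T T k) (u : U) :
    phi k T U l1 l2 x (A ⊗ₜ u) = A l1 l2 * x u := rfl

variable [DecidableEq T]

lemma E_apply (a b c d : T) : E k T a b c d = if a = c ∧ b = d then 1 else 0 :=
  Matrix.single_apply ..

lemma apply_P_mul_mul_P {P : T → U} (horth : ∀ m n, P m * P n = if m = n then P m else 0)
    {a1 a2 : T} {x : U →ₗ[k] k} (hx : ∀ u, x u = x (P a1 * u * P a2)) (μ ν : T) (w : U) :
    x (P μ * w * P ν) = (if a1 = μ then 1 else 0) * (if a2 = ν then 1 else 0) * x w := by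
  rw [hx, show P a1 * (P μ * w * P ν) * P a2 = P a1 * P μ * w * (P ν * P a2) by noncomm_ring,
    horth, horth]
  rcases eq_or_ne a1 μ with rfl | h1
  · rcases eq_or_ne a2 ν with rfl | h2
    · simp [← hx w]
    · simp [h2, h2.symm]
  · simp [h1]

variable [Fintype T]

lemma E_mul_E (a b c d : T) :
    E k T a b * E k T c d = if b = c then E k T a d else 0 := by
  split_ifs with h
  · subst h; simp [E]
  · exact Matrix.single_mul_single_of_ne (h := h) ..

lemma pairF_phi_embLegs (m1 m2 l1 l2 : T) (y x : U →ₗ[k] k) (A B : Matrix T T k)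
    (s : U ⊗[k] U) :
    WHA.pairF k _ (phi k T U m1 m2 y) (phi k T U l1 l2 x) (embLegs A B s)
      = A m1 m2 * B l1 l2 * WHA.pairF k U y x s := by
  induction s using TensorProduct.induction_on with
  | zero => simp
  | add s t hs ht => simp only [map_add, hs, ht, mul_add]
  | tmul c d => simp only [embLegs_tmul, WHA.pairF_tmul, phi_tmul]; ring

lemma ΔM_E (n1 n2 : T) : ΔM k T (E k T n1 n2) = E k T n1 n2 ⊗ₜ E k T n1 n2 := by
  simp [ΔM, E_apply, ite_and]

lemma ΔH_E_tmul (n1 n2 : T) (u : U) :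
    ΔH k T U (E k T n1 n2 ⊗ₜ u)
      = embLegs (E k T n1 n2) (E k T n1 n2) (Coalgebra.comul (R := k) u) := by
  simp only [ΔH, LinearMap.comp_apply, TensorProduct.map_tmul, ΔM_E, LinearEquiv.coe_coe,
    tensorTensorTensorComm_tmul_tmul]

section TwistedComultiplication

-- Without this shortcut, instance search does not match the multiplication of `H ⊗ H` with that
-- of its `Semiring` structure, so `Finset.sum_mul`, `mul_assoc`, ... do not rewrite there.
abbrev tensorSquareRing : Ring ((Matrix T T k ⊗[k] U) ⊗[k] (Matrix T T k ⊗[k] U)) :=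
  Algebra.TensorProduct.instRing

attribute [local instance] tensorSquareRing

lemma sum_embLegs_diag_mul (f : T → Matrix T T k) (g : T → U ⊗[k] U) (a : Matrix T T k)
    (n1 n2 : T) (t : U ⊗[k] U) :
    (∑ l, embLegs (f l) (E k T l l) (g l)) * embLegs a (E k T n1 n2) t
      = embLegs (f n1 * a) (E k T n1 n2) (g n1 * t) := by
  simp [Finset.sum_mul, embLegs_mul_embLegs, E_mul_E, apply_ite, ite_apply]

lemma embLegs_mul_sum_diag (f : T → Matrix T T k) (g : T → U ⊗[k] U) (a : Matrix T T k)
    (n1 n2 : T) (t : U ⊗[k] U) :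
    embLegs a (E k T n1 n2) t * (∑ l, embLegs (f l) (E k T l l) (g l))
      = embLegs (a * f n2) (E k T n1 n2) (t * g n2) := by
  simp [Finset.mul_sum, embLegs_mul_embLegs, E_mul_E, apply_ite, ite_apply]

lemma emb_mul_embLegs (J : T → U ⊗[k] U) (a : Matrix T T k) (n1 n2 : T) (t : U ⊗[k] U) :
    emb k T U J * embLegs a (E k T n1 n2) t
      = embLegs (E k T n1 n1 * a) (E k T n1 n2) (J n1 * t) :=
  sum_embLegs_diag_mul ..

lemma embLegs_mul_emb (J : T → U ⊗[k] U) (a : Matrix T T k) (n1 n2 : T) (t : U ⊗[k] U) :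
    embLegs a (E k T n1 n2) t * emb k T U J
      = embLegs (a * E k T n2 n2) (E k T n1 n2) (t * J n2) :=
  embLegs_mul_sum_diag ..

variable [AddCommGroup T]

lemma Θbar_eq_sum (P : T → U) :
    Θbar k T U P = ∑ m, ∑ l, embLegs (E k T (l + m) l) (E k T l l) ((1 : U) ⊗ₜ[k] P m) :=
  Finset.sum_comm

lemma Θ_eq_sum (P : T → U) :
    Θ k T U P = ∑ m, ∑ l, embLegs (E k T l (l + m)) (E k T l l) ((1 : U) ⊗ₜ[k] P m) :=
  Finset.sum_comm

lemma Θbar_mul_embLegs (P : T → U) (a : Matrix T T k) (n1 n2 : T) (t : U ⊗[k] U) :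
    Θbar k T U P * embLegs a (E k T n1 n2) t
      = ∑ m, embLegs (E k T (n1 + m) n1 * a) (E k T n1 n2) (((1 : U) ⊗ₜ[k] P m) * t) := by
  rw [Θbar_eq_sum, Finset.sum_mul]
  simp only [sum_embLegs_diag_mul (fun l => E k T (l + _) l)]

lemma sum_embLegs_mul_Θ (P : T → U) (a : T → Matrix T T k) (n1 n2 : T) (t : T → U ⊗[k] U) :
    (∑ m, embLegs (a m) (E k T n1 n2) (t m)) * Θ k T U P
      = ∑ m, ∑ m', embLegs (a m * E k T n2 (n2 + m')) (E k T n1 n2)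
          (t m * ((1 : U) ⊗ₜ[k] P m')) := by
  rw [Θ_eq_sum, Finset.sum_mul]
  simp only [Finset.mul_sum, embLegs_mul_sum_diag (fun l => E k T l (l + _))]

lemma twist_conj_embLegs (P : T → U) (J Jbar : T → U ⊗[k] U) (n1 n2 : T) (s : U ⊗[k] U) :
    (Θbar k T U P * emb k T U Jbar) * embLegs (E k T n1 n2) (E k T n1 n2) s
        * (emb k T U J * Θ k T U P)
      = ∑ m, ∑ m', embLegs (E k T (n1 + m) (n2 + m')) (E k T n1 n2)
          (((1 : U) ⊗ₜ[k] P m) * (Jbar n1 * s * J n2) * ((1 : U) ⊗ₜ[k] P m')) := by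
  calc _ = Θbar k T U P * (emb k T U Jbar * embLegs (E k T n1 n2) (E k T n1 n2) s
          * emb k T U J) * Θ k T U P := by simp only [mul_assoc]
    _ = _ := by
      rw [emb_mul_embLegs, embLegs_mul_emb, Θbar_mul_embLegs, sum_embLegs_mul_Θ]
      simp [E_mul_E, mul_assoc]

lemma pairF_phi_twist_conj (P : T → U) (J Jbar : T → U ⊗[k] U) (x y : U →ₗ[k] k)
    (l1 l2 m1 m2 n1 n2 : T) (s : U ⊗[k] U) :
    WHA.pairF k _ (phi k T U m1 m2 y) (phi k T U l1 l2 x)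
        ((Θbar k T U P * emb k T U Jbar) * embLegs (E k T n1 n2) (E k T n1 n2) s
          * (emb k T U J * Θ k T U P))
      = E k T n1 n2 l1 l2 * WHA.pairF k U y x (((1 : U) ⊗ₜ[k] P (m1 - n1))
          * (Jbar n1 * s * J n2) * ((1 : U) ⊗ₜ[k] P (m2 - n2))) := by
  rw [twist_conj_embLegs]
  simp [pairF_phi_embLegs, E_apply, ite_and, ← eq_sub_iff_add_eq']

end TwistedComultiplication

end DQG

theorem dual_multiplication_general
    (k : Type*) [Field k]
    (T : Type*) [AddCommGroup T] [Fintype T] [DecidableEq T]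
    (U : Type*) [Ring U] [HopfAlgebra k U]
    (P : T → U) (hP : DQG.IsPSystem k T U P)
    (J Jbar : T → U ⊗[k] U)
    (ΔJ : (Matrix T T k ⊗[k] U) →ₗ[k] (Matrix T T k ⊗[k] U) ⊗[k] (Matrix T T k ⊗[k] U))
    (hΔJ : ∀ h : (Matrix T T k ⊗[k] U), ΔJ h =
      (DQG.Θbar k T U P * DQG.emb k T U Jbar) * DQG.ΔH k T U h *
        (DQG.emb k T U J * DQG.Θ k T U P))
    (a1 a2 l1 l2 m1 m2 : T) (x y : U →ₗ[k] k)
    (hx : ∀ u : U, x u = x (P a1 * u * P a2))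
    (z : U →ₗ[k] k)
    (hz : z = WHA.pairF k U y x ∘ₗ LinearMap.mulLeft k (Jbar l1) ∘ₗ
      LinearMap.mulRight k (J l2) ∘ₗ Coalgebra.comul) :
    ∀ h : (Matrix T T k ⊗[k] U),
      WHA.pairF k (Matrix T T k ⊗[k] U) (DQG.phi k T U m1 m2 y) (DQG.phi k T U l1 l2 x) (ΔJ h)
        = (if a1 = m1 - l1 then (1 : k) else 0) * (if a2 = m2 - l2 then (1 : k) else 0) *
            DQG.phi k T U l1 l2 z h := by
  have on_matrix_units : ∀ n1 n2 (u : U),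
      WHA.pairF k _ (DQG.phi k T U m1 m2 y) (DQG.phi k T U l1 l2 x) (ΔJ (DQG.E k T n1 n2 ⊗ₜ u))
        = (if a1 = m1 - l1 then (1 : k) else 0) * (if a2 = m2 - l2 then (1 : k) else 0) *
            DQG.phi k T U l1 l2 z (DQG.E k T n1 n2 ⊗ₜ u) := by
    intro n1 n2 u
    rw [hΔJ, DQG.ΔH_E_tmul, DQG.pairF_phi_twist_conj,
      WHA.pairF_one_tmul_mul_mul_one_tmul _ _ _ _ _ (DQG.apply_P_mul_mul_P hP.orth hx _ _),
      DQG.phi_tmul, hz]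
    by_cases hn : n1 = l1 ∧ n2 = l2
    · obtain ⟨rfl, rfl⟩ := hn
      simp [DQG.E_apply, mul_assoc]
    · simp [DQG.E_apply, hn]
  intro h
  exact LinearMap.congr_fun
    (f := WHA.pairF k _ (DQG.phi k T U m1 m2 y) (DQG.phi k T U l1 l2 x) ∘ₗ ΔJ)
    (g := ((if a1 = m1 - l1 then (1 : k) else 0) * (if a2 = m2 - l2 then (1 : k) else 0)) •
      DQG.phi k T U l1 l2 z) (TensorProduct.ext_matrix_single on_matrix_units) h

set_option maxHeartbeats 1000000 in
set_option synthInstance.maxHeartbeats 200000 in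
/-- the convolution product of the dual of the twisted weak Hopf algebra
`H_J`, computed on the functionals `φ^x_{λ¹λ²}`. -/
theorem dual_multiplication
    (k : Type*) [Field k]
    (T : Type*) [AddCommGroup T] [Fintype T] [DecidableEq T]
    (U : Type*) [Ring U] [HopfAlgebra k U] [FiniteDimensional k U]
    (P : T → U) (hP : DQG.IsPSystem k T U P)
    (J Jbar : T → U ⊗[k] U) (hJ : DQG.IsDynTwist k T U P J Jbar)
    (ΔJ : (Matrix T T k ⊗[k] U) →ₗ[k] (Matrix T T k ⊗[k] U) ⊗[k] (Matrix T T k ⊗[k] U))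
    (hΔJ : ∀ h : (Matrix T T k ⊗[k] U), ΔJ h =
      (DQG.Θbar k T U P * DQG.emb k T U Jbar) * DQG.ΔH k T U h *
        (DQG.emb k T U J * DQG.Θ k T U P))
    (a1 a2 b1 b2 l1 l2 m1 m2 : T) (x y : U →ₗ[k] k)
    (hx : ∀ u : U, x u = x (P a1 * u * P a2))
    (hy : ∀ u : U, y u = y (P b1 * u * P b2))
    (z : U →ₗ[k] k)
    (hz : z = WHA.pairF k U y x ∘ₗ LinearMap.mulLeft k (Jbar l1) ∘ₗ
      LinearMap.mulRight k (J l2) ∘ₗ Coalgebra.comul) :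
    ∀ h : (Matrix T T k ⊗[k] U),
      WHA.pairF k (Matrix T T k ⊗[k] U) (DQG.phi k T U m1 m2 y) (DQG.phi k T U l1 l2 x) (ΔJ h)
        = (if a1 = m1 - l1 then (1 : k) else 0) * (if a2 = m2 - l2 then (1 : k) else 0) *
            DQG.phi k T U l1 l2 z h :=
  dual_multiplication_general k T U P hP J Jbar ΔJ hΔJ a1 a2 l1 l2 m1 m2 x y hx z hz
end
end

section
/- Let B be an associative unital algebra over a field k, let R, Ω ∈ B⊗B with Ω invertible, and let φ, ψ : B → B be unital algebra homomorphisms such that (φ⊗id)(R) = (id⊗ψ)(R), (φ⊗id)(Ω) = Ω, and (id⊗ψ)(Ω) = Ω. Define k-linear operators on B⊗B by A_L(X) = (φ⊗id)(R·X·Ω⁻¹) and A_R(X) = (id⊗ψ)(R·X·Ω⁻¹). Then A_L and A_R commute: A_L(A_R(X)) = A_R(A_L(X)) for all X ∈ B⊗B. -/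
open TensorProduct

noncomputable section

/-- the abstract ABRR-type operators
`A_L(X) = (φ⊗id)(R X Ω⁻¹)` and `A_R(X) = (id⊗ψ)(R X Ω⁻¹)` commute, provided
`(φ⊗id)(R) = (id⊗ψ)(R)` and `Ω` is invertible and fixed by `φ⊗id` and `id⊗ψ`. -/
theorem abrr_operators_commute
    (k B : Type*) [Field k] [Ring B] [Algebra k B]
    (R Ω Ωinv : B ⊗[k] B)
    (hΩ₁ : Ω * Ωinv = 1) (hΩ₂ : Ωinv * Ω = 1)
    (φ ψ : B →ₐ[k] B)
    (hR : Algebra.TensorProduct.map φ (AlgHom.id k B) R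
        = Algebra.TensorProduct.map (AlgHom.id k B) ψ R)
    (hΩφ : Algebra.TensorProduct.map φ (AlgHom.id k B) Ω = Ω)
    (hΩψ : Algebra.TensorProduct.map (AlgHom.id k B) ψ Ω = Ω) :
    ∀ X : B ⊗[k] B,
      Algebra.TensorProduct.map φ (AlgHom.id k B)
          (R * (Algebra.TensorProduct.map (AlgHom.id k B) ψ (R * X * Ωinv)) * Ωinv)
        = Algebra.TensorProduct.map (AlgHom.id k B) ψ
          (R * (Algebra.TensorProduct.map φ (AlgHom.id k B) (R * X * Ωinv)) * Ωinv) := by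
  intro X
  set F := Algebra.TensorProduct.map φ (AlgHom.id k B) with hF
  set G := Algebra.TensorProduct.map (AlgHom.id k B) ψ with hG
  -- F and G commute
  have hcomm : ∀ x : B ⊗[k] B, F (G x) = G (F x) := by
    intro x
    have : (F.comp G : B ⊗[k] B →ₐ[k] B ⊗[k] B) = G.comp F := by
      ext b
      · simp [F, G]
      · simp [F, G]
    simpa using congrArg (fun f : B ⊗[k] B →ₐ[k] B ⊗[k] B => f x) this
  -- F and G fix Ωinv
  have hinv : ∀ (H : B ⊗[k] B →ₐ[k] B ⊗[k] B), H Ω = Ω → H Ωinv = Ωinv := by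
    intro H hΩ
    have h1 : H Ωinv * Ω = 1 := by
      rw [← hΩ, ← map_mul, hΩ₂, map_one]
    calc H Ωinv = H Ωinv * (Ω * Ωinv) := by rw [hΩ₁, mul_one]
      _ = (H Ωinv * Ω) * Ωinv := by rw [mul_assoc]
      _ = Ωinv := by rw [h1, one_mul]
  have hFinv : F Ωinv = Ωinv := hinv F hΩφ
  have hGinv : G Ωinv = Ωinv := hinv G hΩψ
  calc F (R * G (R * X * Ωinv) * Ωinv)
      = F R * F (G (R * X * Ωinv)) * F Ωinv := by rw [map_mul F _ Ωinv, map_mul F R]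
    _ = G R * G (F (R * X * Ωinv)) * G Ωinv := by
        rw [hR, hcomm, hFinv, hGinv]
    _ = G (R * F (R * X * Ωinv) * Ωinv) := by rw [map_mul G _ Ωinv, map_mul G R]
end
end

section
/- Let B be an associative unital algebra over a field k and R ∈ B⊗B an element satisfying the quantum Yang–Baxter equation R₁₂R₁₃R₂₃ = R₂₃R₁₃R₁₂ in B⊗B⊗B. Let φ, ψ : B → B be unital algebra homomorphisms such that (φ⊗id)(R) = (id⊗ψ)(R); denote this common element by R̂, and set R̃ = (φ⊗ψ)(R). Then R̂₁₃R̂₁₂R̃₁₃R̂₂₃ = R̂₁₃R̂₂₃R̃₁₃R̂₁₂ in B⊗B⊗B. -/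
open TensorProduct

noncomputable section

/-! Apply `φ ⊗ id ⊗ ψ` to the Yang–Baxter equation. Since `R̂ = (φ ⊗ id)(R) = (id ⊗ ψ)(R)`, the
legs `12` and `23` of `R` both become legs of `R̂`, while the leg `13` becomes `R̃₁₃`; this gives
`R̂₁₂R̃₁₃R̂₂₃ = R̂₂₃R̃₁₃R̂₁₂`, and it remains to multiply on the left by `R̂₁₃`. -/

namespace WHA

open Algebra.TensorProduct (map)

variable {k B : Type*} [Field k] [Ring B] [Algebra k B] (f g h : B →ₐ[k] B)

theorem map_map_leg12 (x : B ⊗[k] B) :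
    map f (map g h) (leg12 k B x) = leg12 k B (map f g x) := by
  induction x using TensorProduct.induction_on with
  | zero => simp
  | tmul a b => simp [leg12]
  | add x y hx hy => simp only [map_add, hx, hy]

theorem map_map_leg23 (x : B ⊗[k] B) :
    map f (map g h) (leg23 k B x) = leg23 k B (map g h x) := by
  simp [leg23]

theorem map_map_leg13 (x : B ⊗[k] B) :
    map f (map g h) (leg13 k B x) = leg13 k B (map f h x) := by
  induction x using TensorProduct.induction_on with
  | zero => simp
  | tmul a b => simp [leg13]
  | add x y hx hy => simp only [map_add, hx, hy]

theorem qybe_map {R : B ⊗[k] B}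
    (hQYBE : leg12 k B R * leg13 k B R * leg23 k B R = leg23 k B R * leg13 k B R * leg12 k B R) :
    leg12 k B (map f g R) * leg13 k B (map f h R) * leg23 k B (map g h R) =
      leg23 k B (map g h R) * leg13 k B (map f h R) * leg12 k B (map f g R) := by
  simpa only [map_mul, map_map_leg12, map_map_leg13, map_map_leg23] using
    congrArg (map f (map g h)) hQYBE

end WHA

/-- if `R` satisfies the quantum Yang–Baxter equation,
`R̂ = (φ⊗id)(R) = (id⊗ψ)(R)` and `R̃ = (φ⊗ψ)(R)`, then
`R̂₁₃R̂₁₂R̃₁₃R̂₂₃ = R̂₁₃R̂₂₃R̃₁₃R̂₁₂`. -/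
theorem qybe_hat_tilde_identity
    (k B : Type*) [Field k] [Ring B] [Algebra k B]
    (R : B ⊗[k] B)
    (hQYBE : WHA.leg12 k B R * WHA.leg13 k B R * WHA.leg23 k B R
        = WHA.leg23 k B R * WHA.leg13 k B R * WHA.leg12 k B R)
    (φ ψ : B →ₐ[k] B)
    (Rhat : B ⊗[k] B)
    (hhat₁ : Rhat = Algebra.TensorProduct.map φ (AlgHom.id k B) R)
    (hhat₂ : Rhat = Algebra.TensorProduct.map (AlgHom.id k B) ψ R)
    (Rtilde : B ⊗[k] B)
    (htilde : Rtilde = Algebra.TensorProduct.map φ ψ R) :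
    WHA.leg13 k B Rhat * WHA.leg12 k B Rhat * WHA.leg13 k B Rtilde * WHA.leg23 k B Rhat
      = WHA.leg13 k B Rhat * WHA.leg23 k B Rhat * WHA.leg13 k B Rtilde *
          WHA.leg12 k B Rhat := by
  have hmapped := WHA.qybe_map φ (AlgHom.id k B) ψ hQYBE
  rw [← hhat₁, ← hhat₂, ← htilde] at hmapped
  simp only [mul_assoc] at hmapped ⊢
  rw [hmapped]
end
end

section
/- Let J : T → U⊗U be a function such that each J(λ) is invertible and of zero weight, (ε⊗id)J(λ) = (id⊗ε)J(λ) = 1, and J satisfies the shifted twist equation (Δ⊗id)J(λ)·(J(λ+h⁽³⁾)⊗1) = (id⊗Δ)J(λ)·(1⊗J(λ−h⁽¹⁾)), where J(λ+h⁽³⁾)⊗1 = Σ_{μ∈T} J(λ+μ)⊗P_μ (J-part in factors 1,2, P_μ in factor 3) and 1⊗J(λ−h⁽¹⁾) = Σ_{μ∈T} P_μ⊗J(λ−μ) (P_μ in factor 1, J-part in factors 2,3). Then 𝒥(λ) := J(2λ+h⁽¹⁾+h⁽²⁾) := Σ_{μ,ν∈T} (P_μ⊗P_ν)·J(2λ+μ+ν)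 is a dynamical twist for U, i.e. each 𝒥(λ) is invertible and of zero weight, (ε⊗id)𝒥(λ) = (id⊗ε)𝒥(λ) = 1, and (Δ⊗id)𝒥(λ)·(𝒥(λ+h⁽³⁾)⊗1) = (id⊗Δ)𝒥(λ)·(1⊗𝒥(λ)). -/
open TensorProduct

noncomputable section

/-!
The elements `eₜ = Δ(Pₜ)` form a complete family of orthogonal idempotents of `U ⊗ U`, and
`𝒥(λ) = Σₜ eₜ J(2λ + t)` is block diagonal for it, with blocks commuting with every `eₛ`
by zero weight. Products, counits and commutation with `Δ(A)` of such block sums are computed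
block by block, which gives invertibility, zero weight and the counit conditions. For the twist
equation, multiply by the idempotents `(Δ ⊗ id)Δ(Pₜ) = (id ⊗ Δ)Δ(Pₜ)` (coassociativity)
cutting out `h⁽¹⁾ + h⁽²⁾ + h⁽³⁾ = t`. On that block `𝒥(λ + h⁽³⁾) ⊗ 1` reduces to
`J(2λ + t + h⁽³⁾) ⊗ 1` and `1 ⊗ 𝒥(λ)` to `1 ⊗ J(2λ + t - h⁽¹⁾)`, so the block of the twist
equation for `𝒥` at `λ` is the block of the shifted twist equation for `J` at `2λ + t`.
-/

section BlockSum

variable {R I : Type*} [Semiring R] {e : I → R}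

theorem OrthogonalIdempotents.commute (he : OrthogonalIdempotents e) (i j : I) :
    Commute (e i) (e j) := by
  by_cases h : i = j
  · rw [h]
  · exact (he.ortho h).trans (he.ortho (Ne.symm h)).symm

variable [Fintype I]

theorem OrthogonalIdempotents.mul_sum_mul [DecidableEq I] (he : OrthogonalIdempotents e)
    (x : I → R) (i : I) : e i * ∑ j, e j * x j = e i * x i := by
  simp only [Finset.mul_sum, ← mul_assoc, he.mul_eq, ite_mul, zero_mul, Finset.sum_ite_eq,
    Finset.mem_univ, if_true]

theorem sum_mul_mul_of_commute_of_mul_eq {x z : I → R} {y : R} (hx : ∀ i, Commute (e i) (x i))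
    (hy : ∀ i, e i * y = e i * z i) :
    (∑ i, e i * x i) * y = ∑ i, e i * (x i * z i) := by
  rw [Finset.sum_mul]
  refine Finset.sum_congr rfl fun i _ => ?_
  calc e i * x i * y = x i * (e i * y) := by rw [(hx i).eq, mul_assoc]
    _ = e i * (x i * z i) := by rw [hy, ← mul_assoc, ← (hx i).eq, mul_assoc]

theorem OrthogonalIdempotents.sum_mul_mul_sum_mul [DecidableEq I] (he : OrthogonalIdempotents e)
    {x : I → R} (hx : ∀ i, Commute (e i) (x i)) (y : I → R) :
    (∑ i, e i * x i) * ∑ i, e i * y i = ∑ i, e i * (x i * y i) :=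
  sum_mul_mul_of_commute_of_mul_eq hx (he.mul_sum_mul y)

theorem OrthogonalIdempotents.commute_sum_mul (he : OrthogonalIdempotents e) {x : I → R}
    (hx : ∀ i j, Commute (e i) (x j)) (i : I) :
    Commute (e i) (∑ j, e j * x j) :=
  Commute.sum_right _ _ _ fun j _ => (he.commute i j).mul_right (hx i j)

end BlockSum

namespace WHA

variable {k B : Type*} [Field k] [Ring B] [Bialgebra k B]

theorem ext12_eq_algHom : ext12 k B Coalgebra.comul =
    ((Algebra.TensorProduct.assoc k k k B B B).toAlgHom.comp
      (Algebra.TensorProduct.map (Bialgebra.comulAlgHom k B) (AlgHom.id k B))).toLinearMap :=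
  TensorProduct.ext' fun _ _ => rfl

theorem ext23_eq_algHom : ext23 k B Coalgebra.comul =
    (Algebra.TensorProduct.map (AlgHom.id k B) (Bialgebra.comulAlgHom k B)).toLinearMap :=
  TensorProduct.ext' fun _ _ => rfl

theorem epsL_eq_algHom : epsL k B Coalgebra.counit =
    ((Algebra.TensorProduct.lid k B).toAlgHom.comp
      (Algebra.TensorProduct.map (Bialgebra.counitAlgHom k B) (AlgHom.id k B))).toLinearMap :=
  TensorProduct.ext' fun _ _ => rfl

theorem epsR_eq_algHom : epsR k B Coalgebra.counit =
    ((Algebra.TensorProduct.rid k k B).toAlgHom.comp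
      (Algebra.TensorProduct.map (AlgHom.id k B) (Bialgebra.counitAlgHom k B))).toLinearMap :=
  TensorProduct.ext' fun _ _ => rfl

theorem ext12_mul (x y : B ⊗[k] B) :
    ext12 k B Coalgebra.comul (x * y) =
      ext12 k B Coalgebra.comul x * ext12 k B Coalgebra.comul y := by
  rw [ext12_eq_algHom, AlgHom.toLinearMap_apply, AlgHom.toLinearMap_apply,
    AlgHom.toLinearMap_apply]
  exact map_mul _ x y

theorem ext23_mul (x y : B ⊗[k] B) :
    ext23 k B Coalgebra.comul (x * y) =
      ext23 k B Coalgebra.comul x * ext23 k B Coalgebra.comul y := by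
  rw [ext23_eq_algHom, AlgHom.toLinearMap_apply, AlgHom.toLinearMap_apply,
    AlgHom.toLinearMap_apply]
  exact map_mul _ x y

theorem epsL_mul (x y : B ⊗[k] B) :
    epsL k B Coalgebra.counit (x * y) =
      epsL k B Coalgebra.counit x * epsL k B Coalgebra.counit y := by
  rw [epsL_eq_algHom, AlgHom.toLinearMap_apply, AlgHom.toLinearMap_apply,
    AlgHom.toLinearMap_apply]
  exact map_mul _ x y

theorem epsR_mul (x y : B ⊗[k] B) :
    epsR k B Coalgebra.counit (x * y) =
      epsR k B Coalgebra.counit x * epsR k B Coalgebra.counit y := by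
  rw [epsR_eq_algHom, AlgHom.toLinearMap_apply, AlgHom.toLinearMap_apply,
    AlgHom.toLinearMap_apply]
  exact map_mul _ x y

theorem ext12_comul_eq_ext23_comul (a : B) :
    ext12 k B Coalgebra.comul (Coalgebra.comul a) = ext23 k B Coalgebra.comul (Coalgebra.comul a) :=
  Coalgebra.coassoc_apply a

theorem epsL_comul (a : B) : epsL k B Coalgebra.counit (Coalgebra.comul a) = a := by
  change TensorProduct.lid k B (Coalgebra.counit.rTensor B (Coalgebra.comul a)) = a
  rw [Coalgebra.rTensor_counit_comul, TensorProduct.lid_tmul, one_smul]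

theorem epsR_comul (a : B) : epsR k B Coalgebra.counit (Coalgebra.comul a) = a := by
  change TensorProduct.rid k B (Coalgebra.counit.lTensor B (Coalgebra.comul a)) = a
  rw [Coalgebra.lTensor_counit_comul, TensorProduct.rid_tmul, one_smul]

theorem commute_ext12 {x y : B ⊗[k] B} (h : Commute x y) :
    Commute (ext12 k B Coalgebra.comul x) (ext12 k B Coalgebra.comul y) := by
  rw [ext12_eq_algHom, AlgHom.toLinearMap_apply, AlgHom.toLinearMap_apply]
  exact h.map _

theorem commute_ext23 {x y : B ⊗[k] B} (h : Commute x y) :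
    Commute (ext23 k B Coalgebra.comul x) (ext23 k B Coalgebra.comul y) := by
  rw [ext23_eq_algHom, AlgHom.toLinearMap_apply, AlgHom.toLinearMap_apply]
  exact h.map _

end WHA

namespace DQG

variable {k T U : Type*} [Field k] [Ring U] [HopfAlgebra k U] {P : T → U}

theorem withP_eq_assoc (m : T) (x : U ⊗[k] U) :
    withP k T U P m x = Algebra.TensorProduct.assoc k k k U U U (x ⊗ₜ P m) := by
  induction x using TensorProduct.induction_on with
  | zero => simp
  | tmul a b => rfl
  | add x y hx hy => rw [map_add, hx, hy, TensorProduct.add_tmul, map_add]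

variable [AddCommGroup T] [Fintype T] [DecidableEq T]

theorem IsPSystem.completeOrthogonalIdempotents (hP : IsPSystem k T U P) :
    CompleteOrthogonalIdempotents P :=
  ⟨OrthogonalIdempotents.iff_mul_eq.mpr hP.orth, hP.sum_one⟩

theorem IsPSystem.completeOrthogonalIdempotents_comul (hP : IsPSystem k T U P) :
    CompleteOrthogonalIdempotents fun t => Coalgebra.comul (R := k) (P t) :=
  hP.completeOrthogonalIdempotents.map (Bialgebra.comulAlgHom k U).toRingHom

theorem IsPSystem.withP_mul_withP (hP : IsPSystem k T U P) (m n : T) (x y : U ⊗[k] U) :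
    withP k T U P m x * withP k T U P n y = if m = n then withP k T U P m (x * y) else 0 := by
  rw [withP_eq_assoc, withP_eq_assoc, ← map_mul, Algebra.TensorProduct.tmul_mul_tmul, hP.orth]
  split_ifs
  · rw [withP_eq_assoc]
  · rw [TensorProduct.tmul_zero, map_zero]

theorem IsPSystem.withPleft_mul_withPleft (hP : IsPSystem k T U P) (m n : T) (x y : U ⊗[k] U) :
    withPleft k T U P m x * withPleft k T U P n y =
      if m = n then withPleft k T U P m (x * y) else 0 := by
  change P m ⊗ₜ x * P n ⊗ₜ y = _
  rw [Algebra.TensorProduct.tmul_mul_tmul, hP.orth]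
  split_ifs
  · rfl
  · rw [TensorProduct.zero_tmul]

theorem IsPSystem.leg23_eq_sum_withPleft (hP : IsPSystem k T U P) (x : U ⊗[k] U) :
    WHA.leg23 k U x = ∑ m, withPleft k T U P m x := by
  change 1 ⊗ₜ x = _
  rw [← hP.sum_one, TensorProduct.sum_tmul]
  rfl

theorem IsPSystem.ext12_comul_eq_sum_withP (hP : IsPSystem k T U P) (t : T) :
    WHA.ext12 k U Coalgebra.comul (Coalgebra.comul (P t)) =
      ∑ n, withP k T U P (t - n) (Coalgebra.comul (P n)) := by
  rw [hP.comul_P, map_sum]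
  refine Finset.sum_congr rfl fun n _ => ?_
  rw [withP_eq_assoc]
  rfl

theorem IsPSystem.ext23_comul_eq_sum_withPleft (hP : IsPSystem k T U P) (t : T) :
    WHA.ext23 k U Coalgebra.comul (Coalgebra.comul (P t)) =
      ∑ n, withPleft k T U P n (Coalgebra.comul (P (t - n))) := by
  rw [hP.comul_P, map_sum]
  rfl

theorem IsPSystem.ext12_comul_mul_withP (hP : IsPSystem k T U P) (t m : T) (y : U ⊗[k] U) :
    WHA.ext12 k U Coalgebra.comul (Coalgebra.comul (P t)) * withP k T U P m y =
      withP k T U P m (Coalgebra.comul (P (t - m)) * y) := by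
  rw [hP.ext12_comul_eq_sum_withP, Finset.sum_mul, Finset.sum_eq_single (t - m)]
  · rw [hP.withP_mul_withP, sub_sub_cancel, if_pos rfl]
  · intro n _ hn
    rw [hP.withP_mul_withP, if_neg]
    rintro rfl
    exact hn (sub_sub_cancel t n).symm
  · exact fun h => absurd (Finset.mem_univ _) h

theorem IsPSystem.ext23_comul_mul_withPleft (hP : IsPSystem k T U P) (t m : T)
    (y : U ⊗[k] U) :
    WHA.ext23 k U Coalgebra.comul (Coalgebra.comul (P t)) * withPleft k T U P m y =
      withPleft k T U P m (Coalgebra.comul (P (t - m)) * y) := by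
  simp only [hP.ext23_comul_eq_sum_withPleft, Finset.sum_mul, hP.withPleft_mul_withPleft,
    Finset.sum_ite_eq', Finset.mem_univ, if_true]

variable (k P) in
/-- `J(2λ + h⁽¹⁾ + h⁽²⁾)`, written as `Σₜ Δ(Pₜ) J(2λ + t)`: `Δ(Pₜ)` projects onto
`h⁽¹⁾ + h⁽²⁾ = t`. -/
def doubledTwist (J : T → U ⊗[k] U) (l : T) : U ⊗[k] U :=
  ∑ t, Coalgebra.comul (P t) * J (l + l + t)

variable {J : T → U ⊗[k] U}

theorem IsPSystem.sum_tmul_mul_eq_doubledTwist (hP : IsPSystem k T U P) (l : T) :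
    ∑ m, ∑ n, (P m ⊗ₜ[k] P n) * J (l + l + m + n) = doubledTwist k P J l := by
  calc ∑ m, ∑ n, (P m ⊗ₜ[k] P n) * J (l + l + m + n)
      = ∑ m, ∑ t, (P m ⊗ₜ[k] P (t - m)) * J (l + l + t) := by
        refine Finset.sum_congr rfl fun m _ =>
          Fintype.sum_equiv (Equiv.addLeft m) _ _ fun n => ?_
        rw [Equiv.coe_addLeft, add_sub_cancel_left, add_assoc (l + l)]
    _ = ∑ t, ∑ m, (P m ⊗ₜ[k] P (t - m)) * J (l + l + t) := Finset.sum_comm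
    _ = doubledTwist k P J l := by
        refine Finset.sum_congr rfl fun t _ => ?_
        rw [hP.comul_P, Finset.sum_mul]

theorem IsPSystem.comul_mul_doubledTwist (hP : IsPSystem k T U P) (l s : T) :
    Coalgebra.comul (P s) * doubledTwist k P J l = Coalgebra.comul (P s) * J (l + l + s) :=
  hP.completeOrthogonalIdempotents_comul.toOrthogonalIdempotents.mul_sum_mul _ s

theorem IsPSystem.doubledTwist_mul_doubledTwist_eq_one (hP : IsPSystem k T U P)
    (hw : ∀ l m, Commute (J l) (Coalgebra.comul (P m))) {J' : T → U ⊗[k] U}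
    (hJJ' : ∀ l, J l * J' l = 1) (l : T) :
    doubledTwist k P J l * doubledTwist k P J' l = 1 := by
  have he := hP.completeOrthogonalIdempotents_comul
  rw [doubledTwist, doubledTwist,
    he.toOrthogonalIdempotents.sum_mul_mul_sum_mul (fun t => (hw _ t).symm)]
  simp only [hJJ', mul_one]
  exact he.complete

theorem IsPSystem.commute_doubledTwist_comul (hP : IsPSystem k T U P)
    (hw : ∀ l m, Commute (J l) (Coalgebra.comul (P m))) (l m : T) :
    Commute (doubledTwist k P J l) (Coalgebra.comul (P m)) :=
  (hP.completeOrthogonalIdempotents_comul.toOrthogonalIdempotents.commute_sum_mul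
    (x := fun t => J (l + l + t)) (fun m _ => (hw _ m).symm) m).symm

theorem IsPSystem.epsL_doubledTwist (hP : IsPSystem k T U P)
    (hεl : ∀ l, WHA.epsL k U Coalgebra.counit (J l) = 1) (l : T) :
    WHA.epsL k U Coalgebra.counit (doubledTwist k P J l) = 1 := by
  simp only [doubledTwist, map_sum, WHA.epsL_mul, WHA.epsL_comul, hεl, mul_one, hP.sum_one]

theorem IsPSystem.epsR_doubledTwist (hP : IsPSystem k T U P)
    (hεr : ∀ l, WHA.epsR k U Coalgebra.counit (J l) = 1) (l : T) :
    WHA.epsR k U Coalgebra.counit (doubledTwist k P J l) = 1 := by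
  simp only [doubledTwist, map_sum, WHA.epsR_mul, WHA.epsR_comul, hεr, mul_one, hP.sum_one]

theorem IsPSystem.ext12_comul_mul_sum_withP_doubledTwist (hP : IsPSystem k T U P) (l t : T) :
    WHA.ext12 k U Coalgebra.comul (Coalgebra.comul (P t)) *
        ∑ m, withP k T U P m (doubledTwist k P J (l + m)) =
      WHA.ext12 k U Coalgebra.comul (Coalgebra.comul (P t)) *
        ∑ m, withP k T U P m (J (l + l + t + m)) := by
  simp only [Finset.mul_sum, hP.ext12_comul_mul_withP, hP.comul_mul_doubledTwist]
  refine Finset.sum_congr rfl fun m _ => ?_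
  rw [show l + m + (l + m) + (t - m) = l + l + t + m by abel]

theorem IsPSystem.ext23_comul_mul_leg23_doubledTwist (hP : IsPSystem k T U P) (l t : T) :
    WHA.ext23 k U Coalgebra.comul (Coalgebra.comul (P t)) *
        WHA.leg23 k U (doubledTwist k P J l) =
      WHA.ext23 k U Coalgebra.comul (Coalgebra.comul (P t)) *
        ∑ m, withPleft k T U P m (J (l + l + t - m)) := by
  simp only [hP.leg23_eq_sum_withPleft, Finset.mul_sum, hP.ext23_comul_mul_withPleft,
    hP.comul_mul_doubledTwist, add_sub_assoc]

theorem IsPSystem.doubledTwist_dyn (hP : IsPSystem k T U P)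
    (hw : ∀ l m, Commute (J l) (Coalgebra.comul (P m)))
    (hshift : ∀ l : T,
      WHA.ext12 k U Coalgebra.comul (J l) * (∑ m : T, withP k T U P m (J (l + m)))
        = WHA.ext23 k U Coalgebra.comul (J l) * (∑ m : T, withPleft k T U P m (J (l - m))))
    (l : T) :
    WHA.ext12 k U Coalgebra.comul (doubledTwist k P J l) *
        (∑ m : T, withP k T U P m (doubledTwist k P J (l + m))) =
      WHA.ext23 k U Coalgebra.comul (doubledTwist k P J l) *
        WHA.leg23 k U (doubledTwist k P J l) := by
  have h12 : WHA.ext12 k U Coalgebra.comul (doubledTwist k P J l) = ∑ t,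
      WHA.ext12 k U Coalgebra.comul (Coalgebra.comul (P t)) *
        WHA.ext12 k U Coalgebra.comul (J (l + l + t)) := by
    simp only [doubledTwist, map_sum, WHA.ext12_mul]
  have h23 : WHA.ext23 k U Coalgebra.comul (doubledTwist k P J l) = ∑ t,
      WHA.ext23 k U Coalgebra.comul (Coalgebra.comul (P t)) *
        WHA.ext23 k U Coalgebra.comul (J (l + l + t)) := by
    simp only [doubledTwist, map_sum, WHA.ext23_mul]
  rw [h12, h23,
    sum_mul_mul_of_commute_of_mul_eq (fun t => (WHA.commute_ext12 (hw _ t)).symm)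
      (hP.ext12_comul_mul_sum_withP_doubledTwist l),
    sum_mul_mul_of_commute_of_mul_eq (fun t => (WHA.commute_ext23 (hw _ t)).symm)
      (hP.ext23_comul_mul_leg23_doubledTwist l)]
  simp only [hshift, WHA.ext12_comul_eq_ext23_comul]

end DQG

set_option maxHeartbeats 1000000 in
set_option synthInstance.maxHeartbeats 200000 in
/-- if `J` satisfies the shifted twist equation
`(Δ⊗id)J(λ)(J(λ+h⁽³⁾)⊗1) = (id⊗Δ)J(λ)(1⊗J(λ−h⁽¹⁾))`, then
`𝒥(λ) = J(2λ+h⁽¹⁾+h⁽²⁾)` is a dynamical twist for `U`. -/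
theorem shifted_twist_gives_dynamical_twist
    (k : Type*) [Field k]
    (T : Type*) [AddCommGroup T] [Fintype T] [DecidableEq T]
    (U : Type*) [Ring U] [HopfAlgebra k U]
    (P : T → U) (hP : DQG.IsPSystem k T U P)
    (J Jbar : T → U ⊗[k] U)
    (hinv₁ : ∀ l : T, J l * Jbar l = 1) (hinv₂ : ∀ l : T, Jbar l * J l = 1)
    (hw : ∀ l m : T,
      J l * Coalgebra.comul (R := k) (P m) = Coalgebra.comul (R := k) (P m) * J l)
    (hεl : ∀ l : T, WHA.epsL k U Coalgebra.counit (J l) = 1)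
    (hεr : ∀ l : T, WHA.epsR k U Coalgebra.counit (J l) = 1)
    (hshift : ∀ l : T,
      WHA.ext12 k U Coalgebra.comul (J l) * (∑ m : T, DQG.withP k T U P m (J (l + m)))
        = WHA.ext23 k U Coalgebra.comul (J l) *
            (∑ m : T, DQG.withPleft k T U P m (J (l - m))))
    (Jcal : T → U ⊗[k] U)
    (hJcal : ∀ l : T,
      Jcal l = ∑ m : T, ∑ n : T, (P m ⊗ₜ[k] P n) * J (l + l + m + n)) :
    ∃ Jcalbar : T → U ⊗[k] U, DQG.IsDynTwist k T U P Jcal Jcalbar := by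
  obtain rfl : Jcal = DQG.doubledTwist k P J :=
    funext fun l => (hJcal l).trans (hP.sum_tmul_mul_eq_doubledTwist l)
  have hwbar : ∀ l m, Commute (Jbar l) (Coalgebra.comul (P m)) := fun l m =>
    Commute.units_inv_left (u := ⟨J l, Jbar l, hinv₁ l, hinv₂ l⟩) (hw l m)
  exact ⟨DQG.doubledTwist k P Jbar,
    hP.doubledTwist_mul_doubledTwist_eq_one hw hinv₁,
    hP.doubledTwist_mul_doubledTwist_eq_one hwbar hinv₂,
    hP.commute_doubledTwist_comul hw,
    hP.epsL_doubledTwist hεl,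
    hP.epsR_doubledTwist hεr,
    hP.doubledTwist_dyn hw hshift⟩
end
end

section
/- Let J be a dynamical twist for U and let x : T → U be a function such that each x(λ) is invertible, of zero weight, and ε(x(λ)) = 1. Then Jˣ(λ) := Δ(x(λ)⁻¹)·J(λ)·(Σ_{μ∈T} x(λ+μ)⊗x(λ)P_μ) is also a dynamical twist for U. -/
open TensorProduct

noncomputable section

/-! The gauge factor factorises as `x(λ + h⁽²⁾) ⊗ x(λ) = (1 ⊗ x(λ)) · Σ_μ x(λ + μ) ⊗ P_μ`,
and since the `P_μ` are orthogonal idempotents summing to `1`, the map `f ↦ Σ_μ f(μ) ⊗ P_μ` is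
multiplicative. This makes the inverse, zero weight and counit conditions for `Jˣ` immediate.
In the twist equation, `(Δ ⊗ id)` of the gauge factor cancels against `Δ(x⁻¹)(λ + h⁽³⁾)`,
leaving `1 ⊗ 1 ⊗ x(λ)`, while `(id ⊗ Δ)` of it cancels against `1 ⊗ Δ(x(λ)⁻¹)`, leaving
`Σ_μ x(λ + μ) ⊗ Δ(P_μ)`. Splitting `Δ(P_μ) = Σ_{α + β = μ} P_α ⊗ P_β` matches the two
leftovers, and what remains are the two sides of the twist equation for `J`. -/

namespace WHA

variable {k U : Type*} [Field k] [Ring U] [Bialgebra k U]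

local notation "Δ" => Coalgebra.comul (R := k)
local notation "ε" => Coalgebra.counit (R := k)

lemma ext12_comul_mul (X Y : U ⊗[k] U) : ext12 k U Δ (X * Y) = ext12 k U Δ X * ext12 k U Δ Y :=
  map_mul ((Algebra.TensorProduct.assoc k k k U U U).toAlgHom.comp
    (Algebra.TensorProduct.map (Bialgebra.comulAlgHom k U) (AlgHom.id k U))) X Y

lemma ext23_comul_mul (X Y : U ⊗[k] U) : ext23 k U Δ (X * Y) = ext23 k U Δ X * ext23 k U Δ Y :=
  map_mul (Algebra.TensorProduct.map (AlgHom.id k U) (Bialgebra.comulAlgHom k U)) X Y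

lemma leg23_mul (X Y : U ⊗[k] U) : leg23 k U (X * Y) = leg23 k U X * leg23 k U Y :=
  map_mul (Algebra.TensorProduct.includeRight (R := k) (A := U)) X Y

lemma epsL_counit_mul (X Y : U ⊗[k] U) : epsL k U ε (X * Y) = epsL k U ε X * epsL k U ε Y :=
  map_mul ((Algebra.TensorProduct.lid k U).toAlgHom.comp
    (Algebra.TensorProduct.map (Bialgebra.counitAlgHom k U) (AlgHom.id k U))) X Y

lemma epsR_counit_mul (X Y : U ⊗[k] U) : epsR k U ε (X * Y) = epsR k U ε X * epsR k U ε Y :=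
  map_mul ((Algebra.TensorProduct.rid k k U).toAlgHom.comp
    (Algebra.TensorProduct.map (AlgHom.id k U) (Bialgebra.counitAlgHom k U))) X Y

lemma ext12_tmul (a b : U) :
    ext12 k U Δ (a ⊗ₜ b) = Algebra.TensorProduct.assoc k k k U U U (Δ a ⊗ₜ b) :=
  rfl

lemma ext23_tmul (a b : U) : ext23 k U Δ (a ⊗ₜ b) = a ⊗ₜ Δ b :=
  rfl

lemma leg23_apply (X : U ⊗[k] U) : leg23 k U X = 1 ⊗ₜ X :=
  rfl

lemma epsL_tmul (a b : U) : epsL k U ε (a ⊗ₜ b) = ε a • b :=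
  rfl

lemma epsR_tmul (a b : U) : epsR k U ε (a ⊗ₜ b) = ε b • a :=
  rfl

lemma epsL_comul_s18 (a : U) : epsL k U ε (Δ a) = a := by
  simp [epsL, ← LinearMap.rTensor_def]

lemma epsR_comul_s18 (a : U) : epsR k U ε (Δ a) = a := by
  simp [epsR, ← LinearMap.lTensor_def]

lemma ext12_comul_comul (a : U) : ext12 k U Δ (Δ a) = ext23 k U Δ (Δ a) :=
  Coalgebra.coassoc_apply a

end WHA

lemma mul_mul_mul_rev_eq_one {M : Type*} [Monoid M] {a b c a' b' c' : M} (ha : a * a' = 1)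
    (hb : b * b' = 1) (hc : c * c' = 1) : a * b * c * (c' * b' * a') = 1 := by
  simp only [mul_assoc]
  rw [← mul_assoc c, hc, one_mul, ← mul_assoc b, hb, one_mul, ha]

namespace DQG

variable {k T U A : Type*} [Field k] [Fintype T] [Ring U] [HopfAlgebra k U] [Ring A] [Algebra k A]
  {P : T → U}

local notation "Δ" => Coalgebra.comul (R := k)
local notation "ε" => Coalgebra.counit (R := k)
local notation "assoc₃" => Algebra.TensorProduct.assoc k k k U U U

variable (k P) in
/-- `Σ_μ f(μ) ⊗ P_μ`; for `f = g(λ + ·)` this is `g(λ + h⁽²⁾)`. -/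
def weightSum (f : T → A) : A ⊗[k] U := ∑ m, f m ⊗ₜ[k] P m

lemma commute_weightSum_one_tmul {c : U} (hc : ∀ m, Commute c (P m)) (f : T → A) :
    Commute (weightSum k P f) (1 ⊗ₜ c) :=
  Commute.sum_left _ _ _ fun m _ => (Commute.one_right (f m)).tmul (hc m).symm

lemma sum_withP_eq (f : T → U ⊗[k] U) :
    ∑ m, withP k T U P m (f m) = assoc₃ (weightSum k P f) := by
  rw [weightSum, map_sum]
  refine Finset.sum_congr rfl fun m _ => ?_
  induction f m using TensorProduct.induction_on with
  | zero => simp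
  | tmul a b => rfl
  | add c₁ c₂ h₁ h₂ => rw [map_add, h₁, h₂, TensorProduct.add_tmul, map_add]

lemma ext12_weightSum (f : T → U) :
    WHA.ext12 k U Δ (weightSum k P f) = assoc₃ (weightSum k P (fun m => Δ (f m))) := by
  simp only [weightSum, map_sum]
  rfl

lemma commute_ext23_weightSum_leg23 {X : U ⊗[k] U} (hX : ∀ m, Commute X (Δ (P m)))
    (f : T → U) : Commute (WHA.ext23 k U Δ (weightSum k P f)) (WHA.leg23 k U X) := by
  simp only [weightSum, map_sum, WHA.ext23_tmul]
  exact Commute.sum_left _ _ _ fun m _ => (Commute.one_right (f m)).tmul (hX m).symm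

variable [AddCommGroup T]

variable (k P) in
/-- `x(λ + h⁽²⁾) ⊗ x(λ)`. -/
def gaugeTensor (x : T → U) (l : T) : U ⊗[k] U :=
  (1 ⊗ₜ x l) * weightSum k P (fun m => x (l + m))

variable (k P) in
/-- `Jˣ`, with `y` in the role of the pointwise inverse of `x`. -/
def gaugeTransform (x y : T → U) (J : T → U ⊗[k] U) (l : T) : U ⊗[k] U :=
  Δ (y l) * J l * gaugeTensor k P x l

lemma gaugeTensor_eq_sum (x : T → U) (l : T) :
    gaugeTensor k P x l = ∑ m, x (l + m) ⊗ₜ (x l * P m) := by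
  simp [gaugeTensor, weightSum, Finset.mul_sum, Algebra.TensorProduct.tmul_mul_tmul]

lemma gaugeTensor_mul_one_tmul {x : T → U} {l : T} {y : U} (hy : ∀ m, Commute y (P m))
    (hxy : x l * y = 1) :
    gaugeTensor k P x l * (1 ⊗ₜ y) = weightSum k P (fun m => x (l + m)) := by
  rw [gaugeTensor, mul_assoc, (commute_weightSum_one_tmul hy _).eq, ← mul_assoc,
    Algebra.TensorProduct.tmul_mul_tmul, one_mul, hxy, ← Algebra.TensorProduct.one_def, one_mul]

variable [DecidableEq T]

lemma weightSum_mul_weightSum (hP : IsPSystem k T U P) (f g : T → A) :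
    weightSum k P f * weightSum k P g = weightSum k P (fun m => f m * g m) := by
  simp only [weightSum, Finset.sum_mul_sum, Algebra.TensorProduct.tmul_mul_tmul, hP.orth,
    TensorProduct.tmul_ite]
  simp

lemma weightSum_const (hP : IsPSystem k T U P) (a : A) :
    weightSum k P (fun _ => a) = a ⊗ₜ 1 := by
  rw [weightSum, ← TensorProduct.tmul_sum, hP.sum_one]

lemma tmul_P_mul_weightSum (hP : IsPSystem k T U P) (a : A) (m : T) (f : T → A) :
    (a ⊗ₜ P m) * weightSum k P f = (a * f m) ⊗ₜ P m := by
  simp [weightSum, Finset.mul_sum, Algebra.TensorProduct.tmul_mul_tmul, hP.orth,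
    TensorProduct.tmul_ite]

lemma comul_P_eq_weightSum (hP : IsPSystem k T U P) (m : T) :
    Δ (P m) = weightSum k P (fun n => P (m - n)) := by
  rw [hP.comul_P, weightSum]
  exact Fintype.sum_equiv (Equiv.subLeft m) _ _ fun n => by simp

lemma ext23_weightSum (hP : IsPSystem k T U P) (f : T → U) :
    WHA.ext23 k U Δ (weightSum k P f) = ∑ a, ∑ b, f (a + b) ⊗ₜ (P a ⊗ₜ P b) := by
  simp only [weightSum, map_sum, WHA.ext23_tmul, hP.comul_P, TensorProduct.tmul_sum]
  rw [Finset.sum_comm]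
  exact Finset.sum_congr rfl fun a _ =>
    Fintype.sum_equiv (Equiv.subRight a) _ _ fun m => by simp

lemma gaugeTensor_mul_gaugeTensor (hP : IsPSystem k T U P) {y z : T → U}
    (hyz : ∀ a, y a * z a = 1) (hz : ∀ a m, Commute (z a) (P m)) (l : T) :
    gaugeTensor k P y l * gaugeTensor k P z l = 1 := by
  rw [show gaugeTensor k P z l = _ * _ from rfl, ← mul_assoc,
    gaugeTensor_mul_one_tmul (hz l) (hyz l), weightSum_mul_weightSum hP]
  simp only [hyz, weightSum_const hP, Algebra.TensorProduct.one_def]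

lemma commute_gaugeTensor_comul_P (hP : IsPSystem k T U P) {x : T → U}
    (hx : ∀ a m, Commute (x a) (P m)) (l m : T) : Commute (gaugeTensor k P x l) (Δ (P m)) := by
  rw [comul_P_eq_weightSum hP]
  refine Commute.mul_left (commute_weightSum_one_tmul (hx l) _).symm ?_
  rw [Commute, SemiconjBy, weightSum_mul_weightSum hP, weightSum_mul_weightSum hP]
  simp only [(hx _ _).eq]

lemma epsL_gaugeTensor (hP : IsPSystem k T U P) {x : T → U} (hx : ∀ a, ε (x a) = 1) (l : T) :
    WHA.epsL k U ε (gaugeTensor k P x l) = x l := by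
  rw [gaugeTensor, WHA.epsL_counit_mul, WHA.epsL_tmul, weightSum, map_sum]
  simp only [WHA.epsL_tmul, hx, Bialgebra.counit_one, one_smul]
  rw [hP.sum_one, mul_one]

lemma epsR_gaugeTensor (hP : IsPSystem k T U P) {x : T → U} (hx : ∀ a, ε (x a) = 1) (l : T) :
    WHA.epsR k U ε (gaugeTensor k P x l) = x l := by
  rw [gaugeTensor, WHA.epsR_counit_mul, WHA.epsR_tmul, weightSum, map_sum]
  simp [WHA.epsR_tmul, hx, hP.counit_P]

lemma ext12_gaugeTensor_mul_weightSum_comul (hP : IsPSystem k T U P) {x y : T → U}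
    (hxy : ∀ a, x a * y a = 1) (l : T) :
    WHA.ext12 k U Δ (gaugeTensor k P x l) * assoc₃ (weightSum k P (fun m => Δ (y (l + m))))
      = assoc₃ (1 ⊗ₜ x l) := by
  rw [gaugeTensor, WHA.ext12_comul_mul, WHA.ext12_tmul, Bialgebra.comul_one, ext12_weightSum,
    mul_assoc, ← map_mul, ← map_mul, weightSum_mul_weightSum hP]
  simp only [← Bialgebra.comul_mul, hxy, Bialgebra.comul_one, weightSum_const hP,
    ← Algebra.TensorProduct.one_def, mul_one]

lemma tmul_P_mul_gaugeTensor (hP : IsPSystem k T U P) {x : T → U}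
    (hx : ∀ a m, Commute (x a) (P m)) (a b l : T) :
    (P a ⊗ₜ P b) * gaugeTensor k P x l = (P a * x (l + b)) ⊗ₜ (x l * P b) := by
  rw [gaugeTensor, ← mul_assoc, ((Commute.one_right (P a)).tmul (hx l b).symm).eq, mul_assoc,
    tmul_P_mul_weightSum hP, Algebra.TensorProduct.tmul_mul_tmul, one_mul]

lemma ext23_weightSum_mul_leg23_gaugeTensor (hP : IsPSystem k T U P) {x : T → U}
    (hx : ∀ a m, Commute (x a) (P m)) (l : T) :
    WHA.ext23 k U Δ (weightSum k P (fun m => x (l + m))) * WHA.leg23 k U (gaugeTensor k P x l)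
      = assoc₃ (1 ⊗ₜ x l)
        * assoc₃ (weightSum k P (fun m => gaugeTensor k P x (l + m))) := by
  have hL : WHA.ext23 k U Δ (weightSum k P (fun m => x (l + m)))
        * WHA.leg23 k U (gaugeTensor k P x l)
      = ∑ a, ∑ b, x (l + (a + b)) ⊗ₜ ((P a * x (l + b)) ⊗ₜ (x l * P b)) := by
    simp only [ext23_weightSum hP, WHA.leg23_apply, Finset.sum_mul,
      Algebra.TensorProduct.tmul_mul_tmul, mul_one, tmul_P_mul_gaugeTensor hP hx]
  have hR : assoc₃ (1 ⊗ₜ x l) * assoc₃ (weightSum k P (fun m => gaugeTensor k P x (l + m)))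
      = ∑ b, ∑ a, x (l + b + a) ⊗ₜ ((x (l + b) * P a) ⊗ₜ (x l * P b)) := by
    rw [← map_mul]
    simp only [weightSum, Finset.mul_sum, Algebra.TensorProduct.tmul_mul_tmul, one_mul,
      gaugeTensor_eq_sum, TensorProduct.sum_tmul, map_sum, Algebra.TensorProduct.assoc_tmul]
  rw [hL, hR, Finset.sum_comm]
  refine Finset.sum_congr rfl fun b _ => Finset.sum_congr rfl fun a _ => ?_
  rw [add_comm a b, ← add_assoc, (hx (l + b) a).eq]

lemma IsDynTwist.dyn_gaugeTransform (hP : IsPSystem k T U P) {J Jbar : T → U ⊗[k] U}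
    (hJ : IsDynTwist k T U P J Jbar) {x y : T → U} (hxy : ∀ a, x a * y a = 1)
    (hx : ∀ a m, Commute (x a) (P m)) (hy : ∀ a m, Commute (y a) (P m)) (l : T) :
    WHA.ext12 k U Δ (gaugeTransform k P x y J l)
        * ∑ m, withP k T U P m (gaugeTransform k P x y J (l + m))
      = WHA.ext23 k U Δ (gaugeTransform k P x y J l)
        * WHA.leg23 k U (gaugeTransform k P x y J l) := by
  have hdyn := hJ.dyn l
  rw [sum_withP_eq] at hdyn
  rw [sum_withP_eq]
  simp only [gaugeTransform, ← weightSum_mul_weightSum hP, map_mul, WHA.ext12_comul_mul,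
    WHA.ext23_comul_mul, WHA.leg23_mul, WHA.ext12_comul_comul]
  set D := WHA.ext23 k U Δ (Δ (y l))
  set j := WHA.ext12 k U Δ (J l)
  set X := WHA.ext12 k U Δ (gaugeTensor k P x l)
  set e := WHA.ext23 k U Δ (J l)
  set f := WHA.ext23 k U Δ (gaugeTensor k P x l)
  set g := WHA.leg23 k U (Δ (y l))
  set h := WHA.leg23 k U (J l)
  set i := WHA.leg23 k U (gaugeTensor k P x l)
  set q := assoc₃ (1 ⊗ₜ x l)
  set A := assoc₃ (weightSum k P fun m => Δ (y (l + m)))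
  set B := assoc₃ (weightSum k P fun m => J (l + m))
  set C := assoc₃ (weightSum k P fun m => gaugeTensor k P x (l + m))
  set R := WHA.ext23 k U Δ (weightSum k P fun m => x (l + m))
  have hXA : X * A = q := ext12_gaugeTensor_mul_weightSum_comul hP hxy l
  have hqB : Commute q B := ((commute_weightSum_one_tmul (hx l) _).symm).map assoc₃
  have hfg : f * g = R := by
    rw [← show WHA.ext23 k U Δ (1 ⊗ₜ y l) = g from rfl, ← WHA.ext23_comul_mul,
      gaugeTensor_mul_one_tmul (hy l) (hxy l)]
  have hRh : Commute R h := commute_ext23_weightSum_leg23 (hJ.zero_weight l) _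
  have hRi : R * i = q * C := ext23_weightSum_mul_leg23_gaugeTensor hP hx l
  calc D * j * X * (A * B * C) = D * (j * B) * (q * C) := by
        rw [mul_assoc _ X, ← mul_assoc X, ← mul_assoc X A, hXA, hqB.eq]
        simp only [mul_assoc]
    _ = D * (e * h) * (q * C) := by rw [hdyn]
    _ = D * e * f * (g * h * i) := by
        rw [mul_assoc _ f, ← mul_assoc f, ← mul_assoc f g, hfg, hRh.eq, mul_assoc h, hRi]
        simp only [mul_assoc]

theorem IsDynTwist.gaugeTransform (hP : IsPSystem k T U P) {J Jbar : T → U ⊗[k] U}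
    (hJ : IsDynTwist k T U P J Jbar) {x y : T → U} (hxy : ∀ a, x a * y a = 1)
    (hyx : ∀ a, y a * x a = 1) (hx : ∀ a m, Commute (x a) (P m)) (hε : ∀ a, ε (x a) = 1) :
    IsDynTwist k T U P (gaugeTransform k P x y J)
      (fun l => gaugeTensor k P y l * Jbar l * Δ (x l)) := by
  have hy : ∀ a m, Commute (y a) (P m) := fun a m =>
    (hx a m).units_inv_left (u := ⟨x a, y a, hxy a, hyx a⟩)
  have hΔ : ∀ {a b : U}, a * b = 1 → Δ a * Δ b = 1 := fun h => by
    rw [← Bialgebra.comul_mul, h, Bialgebra.comul_one]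
  refine ⟨fun l => ?_, fun l => ?_, fun l m => ?_, fun l => ?_, fun l => ?_,
    hJ.dyn_gaugeTransform hP hxy hx hy⟩
  · exact mul_mul_mul_rev_eq_one (hΔ (hyx l)) (hJ.inv_right l)
      (gaugeTensor_mul_gaugeTensor hP hxy hy l)
  · exact mul_mul_mul_rev_eq_one (gaugeTensor_mul_gaugeTensor hP hyx hx l) (hJ.inv_left l)
      (hΔ (hxy l))
  · exact (((hy l m).map (Bialgebra.comulAlgHom k U)).mul_left (hJ.zero_weight l m)).mul_left
      (commute_gaugeTensor_comul_P hP hx l m)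
  · rw [DQG.gaugeTransform, WHA.epsL_counit_mul, WHA.epsL_counit_mul, WHA.epsL_comul_s18,
      hJ.counit_left, epsL_gaugeTensor hP hε, mul_one, hyx]
  · rw [DQG.gaugeTransform, WHA.epsR_counit_mul, WHA.epsR_counit_mul, WHA.epsR_comul_s18,
      hJ.counit_right, epsR_gaugeTensor hP hε, mul_one, hyx]

end DQG

/-- a gauge transformation of a dynamical twist is a dynamical twist:
`Jˣ(λ) = Δ(x(λ)⁻¹) J(λ) (x(λ+h⁽²⁾)⊗x(λ))`. -/
theorem gauge_of_dynamical_twist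
    (k : Type*) [Field k]
    (T : Type*) [AddCommGroup T] [Fintype T] [DecidableEq T]
    (U : Type*) [Ring U] [HopfAlgebra k U]
    (P : T → U) (hP : DQG.IsPSystem k T U P)
    (J Jbar : T → U ⊗[k] U) (hJ : DQG.IsDynTwist k T U P J Jbar)
    (x xbar : T → U)
    (hxinv₁ : ∀ l : T, x l * xbar l = 1) (hxinv₂ : ∀ l : T, xbar l * x l = 1)
    (hxw : ∀ l m : T, x l * P m = P m * x l)
    (hxε : ∀ l : T, Coalgebra.counit (R := k) (x l) = 1)
    (Jx : T → U ⊗[k] U)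
    (hJx : ∀ l : T,
      Jx l = Coalgebra.comul (R := k) (xbar l) * J l *
        ∑ m : T, x (l + m) ⊗ₜ[k] (x l * P m)) :
    ∃ Jxbar : T → U ⊗[k] U, DQG.IsDynTwist k T U P Jx Jxbar := by
  obtain rfl : Jx = DQG.gaugeTransform k P x xbar J :=
    funext fun l => by rw [hJx, DQG.gaugeTransform, DQG.gaugeTensor_eq_sum]
  exact ⟨_, hJ.gaugeTransform hP hxinv₁ hxinv₂ hxw hxε⟩
end
end
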